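/- Let φ_t(z) = e^{−t}z and T_t f(z) = e^{−t} f(e^{−t}z). For 1 ≤ p ≤ ∞, 0 < q, α < ∞, and f ∈ H(p,q,α), one has ‖T_t f − f‖_{p,q,α} → 0 as t → 0⁺. -/

import Mathlib

open Complex Metric Set Filter MeasureTheory intervalIntegral
open scoped ENNReal Topology Interval

local notation "π" => Real.pi

noncomputable def Mp (p r : ℝ) (f : ℂ → ℂ) : ℝ :=
  ((1 / (2 * Real.pi)) * ∫ θ in (0:ℝ)..(2 * Real.pi),
    ‖f ((r : ℂ) * Complex.exp (θ * Complex.I))‖ ^ p) ^ (1 / p)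

/-- The mixed norm `‖f‖_{p,q,α} = (αq ∫_0^1 (1−r)^{αq−1} M_p(r,f)^q dr)^{1/q}`. -/
noncomputable def Nq (p q α : ℝ) (f : ℂ → ℂ) : ℝ :=
  (α * q * ∫ r in (0:ℝ)..1, (1 - r) ^ (α * q - 1) * (Mp p r f) ^ q) ^ (1 / q)


lemma contOn_comp_circleMap {r : ℝ} (hr : 0 ≤ r) {f : ℂ → ℂ}
    (hf : ContinuousOn f (closedBall (0:ℂ) r)) :
    Continuous fun θ : ℝ => f (circleMap 0 r θ) := by
  apply hf.comp_continuous (continuous_circleMap 0 r)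
  intro θ
  exact circleMap_mem_closedBall 0 hr θ

lemma circleMap_sub_ne_zero {r : ℝ} (hr : 0 < r) {w : ℂ} (hw : ‖w‖ < r) (θ : ℝ) :
    circleMap 0 r θ - w ≠ 0 := by
  apply sub_ne_zero.2
  intro hcw
  have h1 : ‖circleMap 0 r θ‖ = r := by
    rw [norm_circleMap_zero, abs_of_pos hr]
  rw [hcw] at h1
  rw [h1] at hw
  exact lt_irrefl _ hw

lemma cauchy_interval {r : ℝ} (hr : 0 < r) {f : ℂ → ℂ}
    (hf : DiffContOnCl ℂ f (ball (0:ℂ) r)) {w : ℂ} (hw : w ∈ ball (0:ℂ) r) :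
    ∫ θ in (0:ℝ)..2*π,
      (circleMap 0 r θ / (circleMap 0 r θ - w)) * f (circleMap 0 r θ)
      = 2*π* f w := by
  have h := hf.circleIntegral_sub_inv_smul hw
  rw [circleIntegral] at h
  simp only [deriv_circleMap, smul_eq_mul] at h
  rw [mem_ball, dist_eq_norm, sub_zero] at hw
  have h2 : (∫ θ in (0:ℝ)..2*π,
      circleMap 0 r θ * Complex.I * ((circleMap 0 r θ - w)⁻¹ * f (circleMap 0 r θ)))
      = Complex.I * ∫ θ in (0:ℝ)..2*π,
        (circleMap 0 r θ / (circleMap 0 r θ - w)) * f (circleMap 0 r θ) := by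
    rw [← intervalIntegral.integral_const_mul]
    apply intervalIntegral.integral_congr
    intro θ _
    have hne := circleMap_sub_ne_zero hr hw θ
    field_simp
  rw [h2] at h
  have h3 : Complex.I * (2*π* f w) = 2 * π * Complex.I * f w := by ring
  exact mul_left_cancel₀ Complex.I_ne_zero (by rw [h, h3])

lemma mean_value {r : ℝ} (hr : 0 < r) {g : ℂ → ℂ}
    (hg : DiffContOnCl ℂ g (ball (0:ℂ) r)) :
    ∫ θ in (0:ℝ)..2*π, g (circleMap 0 r θ) = 2*π* g 0 := by
  have h := cauchy_interval hr hg (w := 0) (by simp [hr])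
  simp only [sub_zero] at h
  rw [← h]
  apply intervalIntegral.integral_congr
  intro θ _
  simp only
  rw [div_self (circleMap_ne_center hr.ne'), one_mul]

noncomputable def Pker (ζ w : ℂ) : ℝ := ((ζ + w) / (ζ - w)).re

lemma Pker_eq {ζ w : ℂ} (h : ζ ≠ w) :
    Pker ζ w = (Complex.normSq ζ - Complex.normSq w) / Complex.normSq (ζ - w) := by
  have h0 : Complex.normSq (ζ - w) ≠ 0 := by
    simpa [Complex.normSq_eq_zero, sub_eq_zero] using h
  rw [Pker, Complex.div_re, ← add_div]
  congr 1
  simp [Complex.normSq_apply, Complex.add_re, Complex.sub_re, Complex.add_im, Complex.sub_im]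
  ring

lemma Pker_pos {ζ w : ℂ} (h : ‖w‖ < ‖ζ‖) : 0 < Pker ζ w := by
  have hne : ζ ≠ w := by rintro rfl; exact lt_irrefl _ h
  rw [Pker_eq hne]
  apply div_pos
  · have : Complex.normSq w < Complex.normSq ζ := by
      rw [Complex.normSq_eq_norm_sq, Complex.normSq_eq_norm_sq]
      exact pow_lt_pow_left₀ h (norm_nonneg w) two_ne_zero
    linarith
  · rw [Complex.normSq_pos, sub_ne_zero]; exact hne

lemma Pker_decomp {r : ℝ} (hr : 0 < r) {c w : ℂ} (hc : ‖c‖ = r) (hw : ‖w‖ < r) :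
    (Pker c w : ℂ) = c/(c - w) - 1/2
      + (1/2) * (((r:ℂ)^2 + (starRingEnd ℂ) w * c)/((r:ℂ)^2 - (starRingEnd ℂ) w * c)) := by
  have hc0 : c ≠ 0 := by
    intro h; rw [h] at hc; simp at hc; linarith
  have hcw : c - w ≠ 0 := by
    apply sub_ne_zero.2; rintro rfl; rw [hc] at hw; exact lt_irrefl _ hw
  have hd2 : (r:ℂ)^2 - (starRingEnd ℂ) w * c ≠ 0 := by
    intro h
    have h1 : ‖(r:ℂ)^2‖ = ‖(starRingEnd ℂ) w * c‖ := by rw [sub_eq_zero] at h; rw [h]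
    rw [norm_pow, norm_mul, RCLike.norm_conj, hc] at h1
    simp only [Complex.norm_real, Real.norm_eq_abs, abs_of_pos hr] at h1
    have : ‖w‖ * r < r * r := by
      apply mul_lt_mul_of_pos_right hw hr
    rw [sq] at h1; rw [← h1] at this; exact lt_irrefl _ this
  have hconjc : (starRingEnd ℂ) c = (r:ℂ)^2 / c := by
    field_simp
    rw [mul_comm, Complex.mul_conj, Complex.normSq_eq_norm_sq]
    norm_cast
    rw [hc]
  have hre : (Pker c w : ℂ) = ((c+w)/(c-w) + (starRingEnd ℂ) ((c+w)/(c-w))) / 2 := by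
    rw [Pker]
    rw [Complex.add_conj]
    push_cast
    ring
  have hconjK : (starRingEnd ℂ) ((c+w)/(c-w))
      = ((r:ℂ)^2 + (starRingEnd ℂ) w * c)/((r:ℂ)^2 - (starRingEnd ℂ) w * c) := by
    rw [map_div₀, map_add, map_sub, hconjc]
    rw [div_add' _ _ _ hc0, div_sub' hc0]
    have hd2' : (r:ℂ)^2 - c * (starRingEnd ℂ) w ≠ 0 := by rw [mul_comm]; exact hd2
    field_simp
  rw [hre, hconjK]
  field_simp
  ring

lemma norm_circleMap' {r : ℝ} (hr : 0 ≤ r) (θ : ℝ) : ‖circleMap 0 r θ‖ = r := by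
  rw [norm_circleMap_zero, _root_.abs_of_nonneg hr]

lemma poisson_rep {r : ℝ} (hr : 0 < r) {f : ℂ → ℂ}
    (hf : DiffContOnCl ℂ f (ball (0:ℂ) r)) {w : ℂ} (hw : ‖w‖ < r) :
    ∫ θ in (0:ℝ)..2*π, (Pker (circleMap 0 r θ) w : ℂ) * f (circleMap 0 r θ)
      = 2*π* f w := by
  have hcls : closure (ball (0:ℂ) r) = closedBall 0 r := closure_ball 0 hr.ne'
  have hfc : ContinuousOn f (closedBall (0:ℂ) r) := hcls ▸ hf.continuousOn
  have hfcm : Continuous fun θ : ℝ => f (circleMap 0 r θ) := contOn_comp_circleMap hr.le hfc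
  have hden : ∀ z : ℂ, ‖z‖ ≤ r → (r:ℂ)^2 - (starRingEnd ℂ) w * z ≠ 0 := by
    intro z hz h
    have h1 : ‖(r:ℂ)^2‖ = ‖(starRingEnd ℂ) w * z‖ := by rw [sub_eq_zero] at h; rw [h]
    rw [norm_pow, norm_mul, RCLike.norm_conj] at h1
    simp only [Complex.norm_real, Real.norm_eq_abs, abs_of_pos hr] at h1
    have h2 : ‖w‖ * ‖z‖ < r * r := by
      calc ‖w‖ * ‖z‖ ≤ ‖w‖ * r := by
            apply mul_le_mul_of_nonneg_left hz (norm_nonneg w)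
        _ < r * r := by apply mul_lt_mul_of_pos_right hw hr
    rw [sq] at h1; rw [← h1] at h2; exact lt_irrefl _ h2
  set Q : ℂ → ℂ := fun z => (((r:ℂ)^2 + (starRingEnd ℂ) w * z)/((r:ℂ)^2 - (starRingEnd ℂ) w * z))
  have hQd : DiffContOnCl ℂ Q (ball (0:ℂ) r) := by
    constructor
    · apply DifferentiableOn.div
      · fun_prop
      · fun_prop
      · intro z hz
        exact hden z (by rw [mem_ball, dist_eq_norm, sub_zero] at hz; exact hz.le)
    · rw [hcls]
      apply ContinuousOn.div
      · fun_prop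
      · fun_prop
      · intro z hz
        exact hden z (by rwa [mem_closedBall, dist_eq_norm, sub_zero] at hz)
  have hgd : DiffContOnCl ℂ (fun z => Q z * f z) (ball (0:ℂ) r) :=
    ⟨hQd.differentiableOn.mul hf.differentiableOn, hQd.continuousOn.mul hf.continuousOn⟩
  have hQc : Continuous fun θ : ℝ => Q (circleMap 0 r θ) :=
    contOn_comp_circleMap hr.le (hcls ▸ hQd.continuousOn)
  have hKc : Continuous fun θ : ℝ =>
      circleMap 0 r θ / (circleMap 0 r θ - w) * f (circleMap 0 r θ) := by
    apply Continuous.mul _ hfcm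
    apply Continuous.div (continuous_circleMap 0 r) (by fun_prop)
    exact fun θ => circleMap_sub_ne_zero hr hw θ
  have key : ∀ θ : ℝ, (Pker (circleMap 0 r θ) w : ℂ) * f (circleMap 0 r θ)
      = circleMap 0 r θ / (circleMap 0 r θ - w) * f (circleMap 0 r θ)
        + (-(1/2) : ℂ) * f (circleMap 0 r θ)
        + (1/2 : ℂ) * (Q (circleMap 0 r θ) * f (circleMap 0 r θ)) := by
    intro θ
    rw [Pker_decomp hr (norm_circleMap' hr.le θ) hw]
    ring
  rw [intervalIntegral.integral_congr (g :=
      fun θ : ℝ => circleMap 0 r θ / (circleMap 0 r θ - w) * f (circleMap 0 r θ)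
        + (-(1/2) : ℂ) * f (circleMap 0 r θ)
        + (1/2 : ℂ) * (Q (circleMap 0 r θ) * f (circleMap 0 r θ)))
      (fun θ _ => key θ)]
  rw [intervalIntegral.integral_add (((hKc.fun_add (continuous_const.fun_mul hfcm)).intervalIntegrable _ _))
      (((continuous_const.fun_mul (hQc.fun_mul hfcm)).intervalIntegrable _ _)),
    intervalIntegral.integral_add ((hKc.intervalIntegrable _ _))
      ((continuous_const.fun_mul hfcm).intervalIntegrable _ _)]
  rw [intervalIntegral.integral_const_mul, intervalIntegral.integral_const_mul]
  rw [cauchy_interval hr hf (by rwa [mem_ball, dist_eq_norm, sub_zero]),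
    mean_value hr hf, mean_value hr hgd]
  have hQ0 : Q 0 * f 0 = f 0 := by
    have : ((r:ℂ)^2) ≠ 0 := by
      norm_cast; positivity
    simp only [Q, mul_zero, add_zero, sub_zero, div_self this, one_mul]
  rw [hQ0]
  ring

lemma Pker_circleMap_cont {r s : ℝ} (hs : 0 ≤ s) (hsr : s < r) :
    Continuous fun x : ℝ × ℝ => Pker (circleMap 0 r x.1) (circleMap 0 s x.2) := by
  have hr : (0:ℝ) < r := lt_of_le_of_lt hs hsr
  apply Complex.continuous_re.comp
  apply Continuous.div
  · fun_prop
  · fun_prop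
  · intro x
    apply sub_ne_zero.2
    intro h
    have h1 : r = s := by
      rw [← norm_circleMap' hr.le x.1, ← norm_circleMap' hs x.2, h]
    exact absurd h1 (ne_of_gt hsr)

lemma poisson_mass {r : ℝ} (hr : 0 < r) {w : ℂ} (hw : ‖w‖ < r) :
    ∫ θ in (0:ℝ)..2*π, Pker (circleMap 0 r θ) w = 2*π := by
  have h := poisson_rep hr (f := fun _ => 1)
    ⟨differentiableOn_const 1, continuousOn_const⟩ hw
  simp only [mul_one] at h
  rw [intervalIntegral.integral_ofReal] at h
  exact_mod_cast h

lemma psi_mass {r s : ℝ} (hs : 0 ≤ s) (hsr : s < r) (θ : ℝ) :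
    ∫ ψ in (0:ℝ)..2*π, Pker (circleMap 0 r θ) (circleMap 0 s ψ) = 2*π := by
  have hr : (0:ℝ) < r := lt_of_le_of_lt hs hsr
  have hζ : ‖circleMap 0 r θ‖ = r := norm_circleMap' hr.le θ
  have hζ0 : circleMap 0 r θ ≠ 0 := circleMap_ne_center hr.ne'
  rcases eq_or_lt_of_le hs with h0 | hs0
  · have h1 : ∀ ψ:ℝ, Pker (circleMap 0 r θ) (circleMap 0 s ψ) = 1 := by
      intro ψ
      simp only [← h0, circleMap_zero_radius]
      show ((circleMap 0 r θ + 0) / (circleMap 0 r θ - 0)).re = 1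
      rw [add_zero, sub_zero, div_self hζ0, Complex.one_re]
    rw [intervalIntegral.integral_congr (g := fun _ => (1:ℝ)) (fun ψ _ => h1 ψ)]
    simp
  · set ζ := circleMap 0 r θ
    have hden : ∀ z : ℂ, ‖z‖ ≤ s → ζ - z ≠ 0 := by
      intro z hz h
      rw [sub_eq_zero] at h
      rw [h] at hζ
      have := lt_of_le_of_lt hz hsr
      rw [hζ] at this; exact lt_irrefl _ this
    have hH : DiffContOnCl ℂ (fun z => (ζ + z)/(ζ - z)) (ball (0:ℂ) s) := by
      have hcls : closure (ball (0:ℂ) s) = closedBall 0 s := closure_ball 0 hs0.ne'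
      constructor
      · apply DifferentiableOn.div (by fun_prop) (by fun_prop)
        intro z hz
        exact hden z (by rw [mem_ball, dist_eq_norm, sub_zero] at hz; exact hz.le)
      · rw [hcls]
        apply ContinuousOn.div (Continuous.continuousOn (by fun_prop))
          (Continuous.continuousOn (by fun_prop))
        intro z hz
        exact hden z (by rwa [mem_closedBall, dist_eq_norm, sub_zero] at hz)
    have h := mean_value hs0 hH
    simp only [add_zero, sub_zero, div_self hζ0] at h
    have hcont : Continuous fun ψ : ℝ => (ζ + circleMap 0 s ψ)/(ζ - circleMap 0 s ψ) := by
      apply Continuous.div (by fun_prop) (by fun_prop)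
      intro ψ
      exact hden _ (le_of_eq (norm_circleMap' hs ψ))
    have hre : ∫ ψ in (0:ℝ)..2*π, Pker ζ (circleMap 0 s ψ)
        = Complex.reCLM (∫ ψ in (0:ℝ)..2*π,
            (ζ + circleMap 0 s ψ)/(ζ - circleMap 0 s ψ)) := by
      rw [← ContinuousLinearMap.intervalIntegral_comp_comm _ (hcont.intervalIntegrable _ _)]
      apply intervalIntegral.integral_congr
      intro ψ _
      simp [Pker]
    rw [hre, h]
    simp

lemma twopi_pos : (0:ℝ) < 2*π := by positivity

lemma memLp_of_continuous {F : ℝ → ℝ} (hF : Continuous F) (e : ℝ≥0∞) :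
    MeasureTheory.MemLp F e (volume.restrict (Ioc (0:ℝ) (2*π))) := by
  haveI : IsFiniteMeasure (volume.restrict (Ioc (0:ℝ) (2*π))) :=
    ⟨by simp [Real.volume_Ioc]; exact ENNReal.mul_lt_top (by norm_num) ENNReal.ofReal_lt_top⟩
  obtain ⟨C, hC⟩ := (isCompact_Icc : IsCompact (Icc (0:ℝ) (2*π))).exists_bound_of_continuousOn
    hF.continuousOn
  apply MeasureTheory.MemLp.of_bound hF.aestronglyMeasurable C
  filter_upwards [MeasureTheory.ae_restrict_mem measurableSet_Ioc] with x hx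
  exact hC x (Ioc_subset_Icc_self hx)

lemma norm_le_poisson {p r : ℝ} (hp : 1 ≤ p) (hr : 0 < r) {f : ℂ → ℂ}
    (hf : DiffContOnCl ℂ f (ball (0:ℂ) r)) {w : ℂ} (hw : ‖w‖ < r) :
    ‖f w‖ ^ p ≤ (1/(2*π)) * ∫ θ in (0:ℝ)..2*π,
      Pker (circleMap 0 r θ) w * ‖f (circleMap 0 r θ)‖ ^ p := by
  have hp0 : p ≠ 0 := by linarith
  set P : ℝ → ℝ := fun θ => Pker (circleMap 0 r θ) w with hP
  set G : ℝ → ℝ := fun θ => ‖f (circleMap 0 r θ)‖ with hG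
  have hPpos : ∀ θ, 0 < P θ := by
    intro θ
    exact Pker_pos (by rw [norm_circleMap' hr.le]; exact hw)
  have hPcont : Continuous P := by
    apply Complex.continuous_re.comp
    apply Continuous.div (by fun_prop) (by fun_prop)
    exact fun θ => circleMap_sub_ne_zero hr hw θ
  have hcls : closure (ball (0:ℂ) r) = closedBall 0 r := closure_ball 0 hr.ne'
  have hGcont : Continuous G :=
    (contOn_comp_circleMap hr.le (hcls ▸ hf.continuousOn)).norm
  have hGnn : ∀ θ, 0 ≤ G θ := fun θ => norm_nonneg _
  have hrpow_cont : ∀ (e : ℝ), 0 < e → Continuous fun x : ℝ => x ^ e := by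
    intro e he
    exact continuous_iff_continuousAt.mpr
      (fun x => Real.continuousAt_rpow_const x e (Or.inr he.le))
  -- step 1
  have step1 : ‖f w‖ ≤ (1/(2*π)) * ∫ θ in (0:ℝ)..2*π, P θ * G θ := by
    have h := poisson_rep hr hf hw
    have hnn : ‖∫ θ in (0:ℝ)..2*π, (P θ : ℂ) * f (circleMap 0 r θ)‖
        ≤ ∫ θ in (0:ℝ)..2*π, P θ * G θ := by
      refine le_trans (intervalIntegral.norm_integral_le_integral_norm twopi_pos.le) ?_
      apply le_of_eq
      apply intervalIntegral.integral_congr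
      intro θ _
      simp only [norm_mul, Complex.norm_real, Real.norm_eq_abs,
        _root_.abs_of_nonneg (hPpos θ).le, hG]
    rw [h] at hnn
    rw [norm_mul, norm_mul] at hnn
    simp only [Complex.norm_ofNat, Complex.norm_real, Real.norm_eq_abs,
      _root_.abs_of_nonneg Real.pi_pos.le] at hnn
    have heq : ‖f w‖ = 1/(2*π) * (2*π * ‖f w‖) := by
      field_simp
    rw [heq]
    exact mul_le_mul_of_nonneg_left hnn (by positivity)
  -- step 2
  have step2 : ((1/(2*π)) * ∫ θ in (0:ℝ)..2*π, P θ * G θ) ^ p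
      ≤ (1/(2*π)) * ∫ θ in (0:ℝ)..2*π, P θ * G θ ^ p := by
    rcases eq_or_lt_of_le hp with h1 | h1
    · rw [← h1]
      simp [Real.rpow_one]
    · set qq : ℝ := p/(p-1) with hqq
      have hpq : p.HolderConjugate qq := Real.HolderConjugate.conjExponent h1
      set μ := volume.restrict (Ioc (0:ℝ) (2*π)) with hμ
      have hconv : ∀ (H : ℝ → ℝ), (∫ θ in (0:ℝ)..2*π, H θ) = ∫ θ, H θ ∂μ := by
        intro H
        rw [intervalIntegral.integral_of_le twopi_pos.le, hμ]
      have hPGpcont : Continuous fun θ => P θ * G θ ^ p :=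
        hPcont.mul ((hrpow_cont p (by linarith)).comp hGcont)
      have hHolder := MeasureTheory.integral_mul_le_Lp_mul_Lq_of_nonneg hpq
        (μ := μ) (f := fun θ => P θ ^ (1/p) * G θ) (g := fun θ => P θ ^ (1/qq))
        (Eventually.of_forall fun θ =>
          mul_nonneg (Real.rpow_nonneg (hPpos θ).le _) (hGnn θ))
        (Eventually.of_forall fun θ => Real.rpow_nonneg (hPpos θ).le _)
        (memLp_of_continuous ((hPcont.rpow_const
          (fun θ => Or.inl (hPpos θ).ne')).mul hGcont) _)
        (memLp_of_continuous (hPcont.rpow_const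
          (fun θ => Or.inl (hPpos θ).ne')) _)
      have e1 : ∀ θ, (P θ ^ (1/p) * G θ) * P θ ^ (1/qq) = P θ * G θ := by
        intro θ
        rw [mul_right_comm, ← Real.rpow_add (hPpos θ)]
        rw [one_div, one_div, hpq.inv_add_inv_eq_one, Real.rpow_one]
      have e2 : ∀ θ, (P θ ^ (1/p) * G θ) ^ p = P θ * G θ ^ p := by
        intro θ
        rw [Real.mul_rpow (Real.rpow_nonneg (hPpos θ).le _) (hGnn θ)]
        rw [← Real.rpow_mul (hPpos θ).le, one_div_mul_cancel hp0, Real.rpow_one]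
      have e3 : ∀ θ, (P θ ^ (1/qq)) ^ qq = P θ := by
        intro θ
        rw [← Real.rpow_mul (hPpos θ).le, one_div_mul_cancel hpq.symm.ne_zero,
          Real.rpow_one]
      simp only [e1, e2, e3] at hHolder
      have hmass : ∫ θ, P θ ∂μ = 2*π := by
        rw [← hconv]
        exact poisson_mass hr hw
      rw [hmass] at hHolder
      rw [hconv (fun θ => P θ * G θ), hconv (fun θ => P θ * G θ ^ p)]
      set A : ℝ := ∫ θ, P θ * G θ ∂μ with hA
      set B : ℝ := ∫ θ, P θ * G θ ^ p ∂μ with hB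
      have hAnn : 0 ≤ A :=
        MeasureTheory.integral_nonneg (fun θ => mul_nonneg (hPpos θ).le (hGnn θ))
      have hBnn : 0 ≤ B :=
        MeasureTheory.integral_nonneg
          (fun θ => mul_nonneg (hPpos θ).le (Real.rpow_nonneg (hGnn θ) _))
      have hexp : -p + (1/qq)*p = -1 := by
        have h5 : 1/qq = 1 - 1/p := by
          rw [one_div, one_div]
          linarith [hpq.inv_add_inv_eq_one]
        rw [h5]
        field_simp
        ring
      have efact : (1/(2*π))^p * (2*π)^((1/qq)*p) = 1/(2*π) := by
        rw [one_div, ← Real.rpow_neg_one (2*π), ← Real.rpow_mul twopi_pos.le,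
          ← Real.rpow_add twopi_pos, neg_one_mul, hexp, Real.rpow_neg_one]
      calc ((1/(2*π)) * A) ^ p = (1/(2*π))^p * A^p :=
            Real.mul_rpow (by positivity) hAnn
        _ ≤ (1/(2*π))^p * (B^(1/p) * (2*π)^(1/qq))^p := by
            apply mul_le_mul_of_nonneg_left _ (by positivity)
            exact Real.rpow_le_rpow hAnn hHolder (by linarith)
        _ = (1/(2*π))^p * ((B^(1/p))^p * ((2*π)^(1/qq))^p) := by
            rw [Real.mul_rpow (Real.rpow_nonneg hBnn _) (Real.rpow_nonneg twopi_pos.le _)]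
        _ = (1/(2*π))^p * (B * (2*π)^((1/qq)*p)) := by
            rw [← Real.rpow_mul hBnn, one_div_mul_cancel hp0, Real.rpow_one,
              ← Real.rpow_mul twopi_pos.le]
        _ = B * ((1/(2*π))^p * (2*π)^((1/qq)*p)) := by ring
        _ = B * (1/(2*π)) := by rw [efact]
        _ = (1/(2*π)) * B := mul_comm _ _
  calc ‖f w‖ ^ p ≤ ((1/(2*π)) * ∫ θ in (0:ℝ)..2*π, P θ * G θ) ^ p :=
        Real.rpow_le_rpow (norm_nonneg _) step1 (by linarith)
    _ ≤ _ := step2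

lemma mean_mono {p : ℝ} (hp : 1 ≤ p) {f : ℂ → ℂ}
    (hf : DifferentiableOn ℂ f (ball (0:ℂ) 1))
    {s r : ℝ} (hs : 0 ≤ s) (hsr : s ≤ r) (hr : r < 1) :
    (∫ θ in (0:ℝ)..2*π, ‖f (circleMap 0 s θ)‖ ^ p)
      ≤ ∫ θ in (0:ℝ)..2*π, ‖f (circleMap 0 r θ)‖ ^ p := by
  rcases eq_or_lt_of_le hsr with h | hsr'
  · rw [h]
  have hr0 : 0 < r := lt_of_le_of_lt hs hsr'
  have hfr : DiffContOnCl ℂ f (ball (0:ℂ) r) :=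
    ⟨hf.mono (ball_subset_ball hr.le),
     hf.continuousOn.mono (by
       rw [closure_ball 0 hr0.ne']
       exact closedBall_subset_ball hr)⟩
  have hcls : closure (ball (0:ℂ) r) = closedBall 0 r := closure_ball 0 hr0.ne'
  have hrpow_cont : Continuous fun x : ℝ => x ^ p :=
    continuous_iff_continuousAt.mpr
      (fun x => Real.continuousAt_rpow_const x p (Or.inr (by linarith)))
  set X : ℝ × ℝ → ℝ := fun z =>
    Pker (circleMap 0 r z.1) (circleMap 0 s z.2) * ‖f (circleMap 0 r z.1)‖ ^ p with hX
  have hGcont : Continuous fun θ : ℝ => ‖f (circleMap 0 r θ)‖ ^ p :=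
    hrpow_cont.comp (contOn_comp_circleMap hr0.le (hcls ▸ hfr.continuousOn)).norm
  have hXcont : Continuous X :=
    (Pker_circleMap_cont hs hsr').mul (hGcont.comp continuous_fst)
  have hpt : ∀ ψ : ℝ, ‖f (circleMap 0 s ψ)‖ ^ p
      ≤ (1/(2*π)) * ∫ θ in (0:ℝ)..2*π, X (θ, ψ) := by
    intro ψ
    exact norm_le_poisson hp hr0 hfr (w := circleMap 0 s ψ)
      (by rw [norm_circleMap' hs]; exact hsr')
  have hsc : Continuous fun ψ : ℝ => ‖f (circleMap 0 s ψ)‖ ^ p := by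
    apply hrpow_cont.comp
    apply Continuous.norm
    exact contOn_comp_circleMap hs
      ((hcls ▸ hfr.continuousOn).mono (closedBall_subset_closedBall hsr))
  have hparam : Continuous fun ψ : ℝ => ∫ θ in (0:ℝ)..2*π, X (θ, ψ) := by
    apply intervalIntegral.continuous_parametric_intervalIntegral_of_continuous'
      (f := fun ψ θ => X (θ, ψ))
    exact hXcont.comp (continuous_swap)
  have hmono : (∫ ψ in (0:ℝ)..2*π, ‖f (circleMap 0 s ψ)‖ ^ p)
      ≤ ∫ ψ in (0:ℝ)..2*π, (1/(2*π)) * ∫ θ in (0:ℝ)..2*π, X (θ, ψ) := by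
    apply intervalIntegral.integral_mono_on twopi_pos.le
      (hsc.intervalIntegrable _ _)
      ((continuous_const.mul hparam).intervalIntegrable _ _)
    exact fun ψ _ => hpt ψ
  set μ := volume.restrict (Ioc (0:ℝ) (2*π)) with hμ
  have hconv : ∀ (H : ℝ → ℝ), (∫ x in (0:ℝ)..2*π, H x) = ∫ x, H x ∂μ := by
    intro H
    rw [intervalIntegral.integral_of_le twopi_pos.le, hμ]
  have hiint : MeasureTheory.Integrable (Function.uncurry fun θ ψ => X (θ, ψ))
      (μ.prod μ) := by
    rw [hμ, MeasureTheory.Measure.prod_restrict]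
    apply MeasureTheory.IntegrableOn.mono_set
      (hXcont.continuousOn.integrableOn_compact (isCompact_Icc.prod isCompact_Icc))
    exact prod_mono Ioc_subset_Icc_self Ioc_subset_Icc_self
  have hswap : (∫ ψ in (0:ℝ)..2*π, ∫ θ in (0:ℝ)..2*π, X (θ, ψ))
      = ∫ θ in (0:ℝ)..2*π, ∫ ψ in (0:ℝ)..2*π, X (θ, ψ) := by
    rw [hconv (fun ψ => ∫ θ in (0:ℝ)..2*π, X (θ, ψ)),
      hconv (fun θ => ∫ ψ in (0:ℝ)..2*π, X (θ, ψ))]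
    have e1 : ∀ ψ, (∫ θ in (0:ℝ)..2*π, X (θ, ψ)) = ∫ θ, X (θ, ψ) ∂μ :=
      fun ψ => hconv _
    have e2 : ∀ θ, (∫ ψ in (0:ℝ)..2*π, X (θ, ψ)) = ∫ ψ, X (θ, ψ) ∂μ :=
      fun θ => hconv _
    simp_rw [e1, e2]
    exact (MeasureTheory.integral_integral_swap hiint).symm
  have hmass : ∀ θ : ℝ, (∫ ψ in (0:ℝ)..2*π, X (θ, ψ))
      = 2*π * ‖f (circleMap 0 r θ)‖ ^ p := by
    intro θ
    rw [hX]
    simp only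
    rw [intervalIntegral.integral_mul_const, psi_mass hs hsr' θ]
  calc (∫ θ in (0:ℝ)..2*π, ‖f (circleMap 0 s θ)‖ ^ p)
      ≤ ∫ ψ in (0:ℝ)..2*π, (1/(2*π)) * ∫ θ in (0:ℝ)..2*π, X (θ, ψ) := hmono
    _ = (1/(2*π)) * ∫ ψ in (0:ℝ)..2*π, ∫ θ in (0:ℝ)..2*π, X (θ, ψ) := by
        rw [intervalIntegral.integral_const_mul]
    _ = (1/(2*π)) * ∫ θ in (0:ℝ)..2*π, ∫ ψ in (0:ℝ)..2*π, X (θ, ψ) := by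
        rw [hswap]
    _ = (1/(2*π)) * ∫ θ in (0:ℝ)..2*π, 2*π * ‖f (circleMap 0 r θ)‖ ^ p := by
        rw [intervalIntegral.integral_congr (fun θ _ => hmass θ)]
    _ = ∫ θ in (0:ℝ)..2*π, ‖f (circleMap 0 r θ)‖ ^ p := by
        rw [intervalIntegral.integral_const_mul, ← mul_assoc]
        rw [show (1/(2*π)) * (2*π) = 1 by field_simp, one_mul]


lemma Mp_eq (p r : ℝ) (f : ℂ → ℂ) :
    Mp p r f = ((1/(2*π)) * ∫ θ in (0:ℝ)..2*π, ‖f (circleMap 0 r θ)‖ ^ p) ^ (1/p) := by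
  simp [Mp, circleMap]

lemma mean_nonneg (p r : ℝ) (f : ℂ → ℂ) :
    0 ≤ (1/(2*π)) * ∫ θ in (0:ℝ)..2*π, ‖f (circleMap 0 r θ)‖ ^ p := by
  apply mul_nonneg (by positivity)
  apply intervalIntegral.integral_nonneg twopi_pos.le
  intro θ _
  positivity

lemma Mp_nonneg (p r : ℝ) (f : ℂ → ℂ) : 0 ≤ Mp p r f := by
  rw [Mp_eq]
  exact Real.rpow_nonneg (mean_nonneg p r f) _

lemma rpow_sub_bound {p : ℝ} (hp : 1 ≤ p) (u v : ℂ) :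
    ‖u - v‖ ^ p ≤ 2^p * (‖u‖^p + ‖v‖^p) := by
  have hp0 : (0:ℝ) ≤ p := by linarith
  have h1 : ‖u - v‖ ^ p ≤ (2 * max ‖u‖ ‖v‖) ^ p := by
    apply Real.rpow_le_rpow (norm_nonneg _) _ hp0
    calc ‖u - v‖ ≤ ‖u‖ + ‖v‖ := norm_sub_le u v
      _ ≤ 2 * max ‖u‖ ‖v‖ := by
          rcases le_total ‖u‖ ‖v‖ with h | h
          · rw [max_eq_right h]; linarith
          · rw [max_eq_left h]; linarith
  refine h1.trans ?_
  rw [Real.mul_rpow (by norm_num) (le_max_of_le_left (norm_nonneg u))]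
  apply mul_le_mul_of_nonneg_left _ (by positivity)
  rcases le_total ‖u‖ ‖v‖ with h | h
  · rw [max_eq_right h]
    have : (0:ℝ) ≤ ‖u‖ ^ p := Real.rpow_nonneg (norm_nonneg _) _
    linarith
  · rw [max_eq_left h]
    have : (0:ℝ) ≤ ‖v‖ ^ p := Real.rpow_nonneg (norm_nonneg _) _
    linarith

lemma gt_contOn {f : ℂ → ℂ} (hf : DifferentiableOn ℂ f (ball (0:ℂ) 1))
    {t : ℝ} (ht : 0 < t) :
    ContinuousOn (fun z => (Real.exp (-t) : ℂ) * f ((Real.exp (-t) : ℂ) * z) - f z)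
      (ball (0:ℂ) 1) := by
  have ha1 : Real.exp (-t) ≤ 1 := Real.exp_le_one_iff.2 (by linarith)
  have ha0 : 0 < Real.exp (-t) := Real.exp_pos _
  apply ContinuousOn.sub _ hf.continuousOn
  apply ContinuousOn.mul continuousOn_const
  apply hf.continuousOn.comp (continuous_const.fun_mul continuous_id).continuousOn
  intro z hz
  rw [mem_ball, dist_eq_norm, sub_zero] at hz ⊢
  rw [norm_mul, Complex.norm_real, Real.norm_eq_abs, _root_.abs_of_pos ha0, id]
  calc Real.exp (-t) * ‖z‖ ≤ 1 * ‖z‖ :=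
        mul_le_mul_of_nonneg_right ha1 (norm_nonneg z)
    _ < 1 := by rwa [one_mul]

lemma Mp_g_bound {p : ℝ} (hp : 1 ≤ p) {f : ℂ → ℂ}
    (hf : DifferentiableOn ℂ f (ball (0:ℂ) 1))
    {t x : ℝ} (ht : 0 < t) (hx0 : 0 < x) (hx1 : x < 1) :
    Mp p x (fun z => (Real.exp (-t) : ℂ) * f ((Real.exp (-t) : ℂ) * z) - f z)
      ≤ 2^((p+1)/p) * Mp p x f := by
  have hp0 : (0:ℝ) < p := by linarith
  set a : ℝ := Real.exp (-t) with haa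
  have ha0 : 0 < a := Real.exp_pos _
  have ha1 : a ≤ 1 := Real.exp_le_one_iff.2 (by linarith)
  have hax : (0:ℝ) ≤ a * x := by positivity
  have haxx : a * x ≤ x := by nlinarith
  have hrpow_cont : Continuous fun y : ℝ => y ^ p :=
    continuous_iff_continuousAt.mpr
      (fun y => Real.continuousAt_rpow_const y p (Or.inr hp0.le))
  have hfx : ContinuousOn f (closedBall (0:ℂ) x) :=
    hf.continuousOn.mono (closedBall_subset_ball hx1)
  have hfcm : Continuous fun θ : ℝ => f (circleMap 0 x θ) :=
    contOn_comp_circleMap hx0.le hfx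
  have hgc : Continuous fun θ : ℝ =>
      (a : ℂ) * f ((a : ℂ) * circleMap 0 x θ) := by
    apply continuous_const.mul
    apply (hf.continuousOn.mono (closedBall_subset_ball hx1)).comp_continuous
      (continuous_const.fun_mul (continuous_circleMap 0 x))
    intro θ
    rw [mem_closedBall, dist_eq_norm, sub_zero, norm_mul, Complex.norm_real,
      Real.norm_eq_abs, _root_.abs_of_pos ha0, norm_circleMap' hx0.le]
    nlinarith
  have hkey : ∀ θ : ℝ, (a : ℂ) * circleMap 0 x θ = circleMap 0 (a*x) θ := by
    intro θ
    simp only [circleMap, zero_add]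
    push_cast
    ring
  -- integral bound
  have hI1 : (∫ θ in (0:ℝ)..2*π,
      ‖(a:ℂ) * f ((a:ℂ) * circleMap 0 x θ) - f (circleMap 0 x θ)‖ ^ p)
      ≤ ∫ θ in (0:ℝ)..2*π,
        2^p * (‖(a:ℂ) * f ((a:ℂ) * circleMap 0 x θ)‖^p + ‖f (circleMap 0 x θ)‖^p) := by
    apply intervalIntegral.integral_mono_on twopi_pos.le
    · exact ((hrpow_cont.comp (hgc.sub hfcm).norm).intervalIntegrable _ _)
    · apply Continuous.intervalIntegrable
      apply continuous_const.mul
      exact (hrpow_cont.comp hgc.norm).add (hrpow_cont.comp hfcm.norm)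
    · intro θ _
      exact rpow_sub_bound hp _ _
  have hI2 : (∫ θ in (0:ℝ)..2*π,
      2^p * (‖(a:ℂ) * f ((a:ℂ) * circleMap 0 x θ)‖^p + ‖f (circleMap 0 x θ)‖^p))
      = 2^p * ((a^p * ∫ θ in (0:ℝ)..2*π, ‖f (circleMap 0 (a*x) θ)‖^p)
          + ∫ θ in (0:ℝ)..2*π, ‖f (circleMap 0 x θ)‖^p) := by
    rw [intervalIntegral.integral_const_mul]
    congr 1
    rw [← intervalIntegral.integral_const_mul]
    rw [← intervalIntegral.integral_add]
    · apply intervalIntegral.integral_congr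
      intro θ _
      simp only
      rw [hkey θ, norm_mul, Complex.norm_real, Real.norm_eq_abs, _root_.abs_of_pos ha0,
        Real.mul_rpow ha0.le (norm_nonneg _)]
    · apply Continuous.intervalIntegrable
      apply continuous_const.mul
      apply hrpow_cont.comp
      apply Continuous.norm
      apply (hf.continuousOn.mono (closedBall_subset_ball
        (lt_of_le_of_lt haxx hx1))).comp_continuous (continuous_circleMap 0 (a*x))
      intro θ
      rw [mem_closedBall, dist_eq_norm, sub_zero, norm_circleMap' hax]
    · exact (hrpow_cont.comp hfcm.norm).intervalIntegrable _ _
  have hI3 : a^p * (∫ θ in (0:ℝ)..2*π, ‖f (circleMap 0 (a*x) θ)‖^p)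
      ≤ ∫ θ in (0:ℝ)..2*π, ‖f (circleMap 0 x θ)‖^p := by
    have hm := mean_mono hp hf hax haxx hx1
    have hap : a^p ≤ 1 := Real.rpow_le_one ha0.le ha1 hp0.le
    have hnn : (0:ℝ) ≤ ∫ θ in (0:ℝ)..2*π, ‖f (circleMap 0 (a*x) θ)‖^p := by
      apply intervalIntegral.integral_nonneg twopi_pos.le
      intro θ _; positivity
    calc a^p * (∫ θ in (0:ℝ)..2*π, ‖f (circleMap 0 (a*x) θ)‖^p)
        ≤ 1 * (∫ θ in (0:ℝ)..2*π, ‖f (circleMap 0 (a*x) θ)‖^p) :=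
          mul_le_mul_of_nonneg_right hap hnn
      _ = ∫ θ in (0:ℝ)..2*π, ‖f (circleMap 0 (a*x) θ)‖^p := one_mul _
      _ ≤ _ := hm
  -- assemble
  rw [Mp_eq, Mp_eq]
  set mf : ℝ := ∫ θ in (0:ℝ)..2*π, ‖f (circleMap 0 x θ)‖^p with hmf
  have hmfnn : 0 ≤ mf := by
    apply intervalIntegral.integral_nonneg twopi_pos.le
    intro θ _; positivity
  have htot : (∫ θ in (0:ℝ)..2*π,
      ‖(a:ℂ) * f ((a:ℂ) * circleMap 0 x θ) - f (circleMap 0 x θ)‖ ^ p)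
      ≤ 2^(p+1) * mf := by
    refine hI1.trans ?_
    rw [hI2]
    have h2 : (2:ℝ)^(p+1) = 2^p * 2 := by
      rw [Real.rpow_add (by norm_num), Real.rpow_one]
    rw [h2]
    have := hI3
    nlinarith [Real.rpow_nonneg (show (0:ℝ) ≤ 2 by norm_num) p]
  have hnn1 : (0:ℝ) ≤ (1/(2*π)) * ∫ θ in (0:ℝ)..2*π,
      ‖(a:ℂ) * f ((a:ℂ) * circleMap 0 x θ) - f (circleMap 0 x θ)‖ ^ p := by
    apply mul_nonneg (by positivity)
    apply intervalIntegral.integral_nonneg twopi_pos.le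
    intro θ _; positivity
  have halg : ((1/(2*π)) * (2^(p+1) * mf)) ^ (1/p)
      = 2^((p+1)/p) * ((1/(2*π)) * mf) ^ (1/p) := by
    rw [show (1/(2*π)) * (2^(p+1) * mf) = 2^(p+1) * ((1/(2*π)) * mf) by ring]
    rw [Real.mul_rpow (by positivity) (by positivity)]
    rw [← Real.rpow_mul (by norm_num : (0:ℝ) ≤ 2)]
    congr 1
    field_simp
  refine le_trans (Real.rpow_le_rpow hnn1
    (mul_le_mul_of_nonneg_left htot (by positivity)) (by positivity)) (le_of_eq halg)

lemma sup_small {f : ℂ → ℂ} (hf : DifferentiableOn ℂ f (ball (0:ℂ) 1))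
    {r : ℝ} (h0 : 0 < r) (h1 : r < 1) {ε : ℝ} (hε : 0 < ε) :
    ∀ᶠ t in nhdsWithin (0:ℝ) (Ioi 0), ∀ θ : ℝ,
      ‖(Real.exp (-t) : ℂ) * f ((Real.exp (-t) : ℂ) * circleMap 0 r θ)
        - f (circleMap 0 r θ)‖ ≤ ε := by
  have hfK : ContinuousOn f (closedBall (0:ℂ) r) :=
    hf.continuousOn.mono (closedBall_subset_ball h1)
  obtain ⟨M, hM⟩ := (isCompact_closedBall (0:ℂ) r).exists_bound_of_continuousOn hfK
  have hM0 : 0 ≤ M := le_trans (norm_nonneg (f 0)) (hM 0 (by simp [h0.le]))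
  have huc := (isCompact_closedBall (0:ℂ) r).uniformContinuousOn_of_continuous hfK
  rw [Metric.uniformContinuousOn_iff] at huc
  obtain ⟨δ, hδ0, hδ⟩ := huc (ε/2) (by positivity)
  set η : ℝ := min δ (ε/(2*(M+1))) with hη
  have hη0 : 0 < η := lt_min hδ0 (by positivity)
  have htend : Tendsto (fun t : ℝ => 1 - Real.exp (-t)) (nhdsWithin 0 (Ioi 0)) (𝓝 0) := by
    have hc : Continuous fun t : ℝ => 1 - Real.exp (-t) := by fun_prop
    have := hc.tendsto 0
    simp only [neg_zero, Real.exp_zero, sub_self] at this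
    exact this.mono_left nhdsWithin_le_nhds
  filter_upwards [htend (Iio_mem_nhds hη0), self_mem_nhdsWithin] with t hts htp θ
  rw [mem_preimage, mem_Iio] at hts
  rw [mem_Ioi] at htp
  set a : ℝ := Real.exp (-t) with ha
  have ha0 : 0 < a := Real.exp_pos _
  have ha1 : a ≤ 1 := Real.exp_le_one_iff.2 (by linarith)
  set c : ℂ := circleMap 0 r θ with hc
  have hcn : ‖c‖ = r := norm_circleMap' h0.le θ
  have hcK : c ∈ closedBall (0:ℂ) r := by
    rw [mem_closedBall, dist_eq_norm, sub_zero, hcn]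
  have hacK : (a:ℂ) * c ∈ closedBall (0:ℂ) r := by
    rw [mem_closedBall, dist_eq_norm, sub_zero, norm_mul, Complex.norm_real,
      Real.norm_eq_abs, _root_.abs_of_pos ha0, hcn]
    nlinarith
  have hdist : dist ((a:ℂ)*c) c < δ := by
    rw [dist_eq_norm, show (a:ℂ)*c - c = ((a:ℝ) - 1 : ℝ)*c by push_cast; ring,
      norm_mul, Complex.norm_real, Real.norm_eq_abs, abs_of_nonpos (by linarith), hcn]
    have h2 : (1-a) < δ := lt_of_lt_of_le hts (min_le_left _ _)
    have : (1-a) * r ≤ (1-a) * 1 := by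
      apply mul_le_mul_of_nonneg_left h1.le
      nlinarith [Real.exp_le_one_iff.2 (le_of_lt (neg_neg_iff_pos.2 htp))]
    calc -(a-1) * r = (1-a) * r := by ring
      _ ≤ (1-a) := by linarith
      _ < δ := h2
  have hfd := hδ _ hacK _ hcK hdist
  rw [dist_eq_norm] at hfd
  have hdecomp : (a:ℂ) * f ((a:ℂ)*c) - f c
      = ((a:ℝ) - 1 : ℝ) * f ((a:ℂ)*c) + (f ((a:ℂ)*c) - f c) := by
    push_cast
    ring
  rw [hdecomp]
  calc ‖((a:ℝ) - 1 : ℝ) * f ((a:ℂ)*c) + (f ((a:ℂ)*c) - f c)‖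
      ≤ ‖(((a:ℝ) - 1 : ℝ) : ℂ) * f ((a:ℂ)*c)‖ + ‖f ((a:ℂ)*c) - f c‖ := norm_add_le _ _
    _ ≤ (1-a) * M + ε/2 := by
        apply add_le_add _ hfd.le
        rw [norm_mul, Complex.norm_real, Real.norm_eq_abs, abs_of_nonpos (by linarith)]
        have := hM _ hacK
        rw [show -(a-1) = 1-a by ring]
        apply mul_le_mul (le_refl _) this (norm_nonneg _) (by linarith)
    _ ≤ ε/2 + ε/2 := by
        have h3 : 1 - a < ε/(2*(M+1)) := lt_of_lt_of_le hts (min_le_right _ _)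
        have h4 : (1-a) * M ≤ (1-a) * (M+1) := by nlinarith
        have h5 : (1-a) * (M+1) ≤ ε/2 := by
          rw [div_mul_eq_div_div] at h3
          have := mul_le_mul_of_nonneg_right h3.le (by linarith : (0:ℝ) ≤ M+1)
          rwa [div_mul_cancel₀] at this
          linarith
        linarith
    _ = ε := by ring

lemma Mp_contOn {p : ℝ} (hp : 0 < p) {h : ℂ → ℂ}
    (hh : ContinuousOn h (ball (0:ℂ) 1)) :
    ContinuousOn (fun x : ℝ => Mp p x h) (Ioo (0:ℝ) 1) := by
  have hrpow_cont : Continuous fun y : ℝ => y ^ p :=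
    continuous_iff_continuousAt.mpr
      (fun y => Real.continuousAt_rpow_const y p (Or.inr hp.le))
  unfold Mp
  apply ContinuousOn.rpow_const _ (fun x _ => Or.inr (by positivity))
  apply ContinuousOn.mul continuousOn_const
  rw [continuousOn_iff_continuous_restrict]
  apply intervalIntegral.continuous_parametric_intervalIntegral_of_continuous'
    (f := fun (x : Ioo (0:ℝ) 1) (θ : ℝ) => ‖h (((x:ℝ):ℂ) * Complex.exp (θ * Complex.I))‖ ^ p)
  show Continuous fun z : (Ioo (0:ℝ) 1) × ℝ =>
    ‖h (((z.1:ℝ):ℂ) * Complex.exp ((z.2:ℝ) * Complex.I))‖ ^ p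
  apply hrpow_cont.comp
  apply Continuous.norm
  apply hh.comp_continuous
  · fun_prop
  · intro z
    rw [mem_ball, dist_eq_norm, sub_zero]
    rw [norm_mul, Complex.norm_real, Real.norm_eq_abs,
      _root_.abs_of_pos z.1.2.1]
    have he : ‖Complex.exp ((z.2:ℝ) * Complex.I)‖ = 1 := by
      rw [Complex.norm_exp]
      simp
    rw [he, mul_one]
    exact z.1.2.2

lemma Mp_tendsto {p : ℝ} (hp : 1 ≤ p) {f : ℂ → ℂ}
    (hf : DifferentiableOn ℂ f (ball (0:ℂ) 1))
    {x : ℝ} (hx0 : 0 < x) (hx1 : x < 1) :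
    Tendsto (fun t => Mp p x
        (fun z => (Real.exp (-t) : ℂ) * f ((Real.exp (-t):ℂ)*z) - f z))
      (nhdsWithin (0:ℝ) (Ioi 0)) (𝓝 0) := by
  have hp0 : (0:ℝ) < p := by linarith
  have hrpow_cont : Continuous fun y : ℝ => y ^ p :=
    continuous_iff_continuousAt.mpr
      (fun y => Real.continuousAt_rpow_const y p (Or.inr hp0.le))
  rw [NormedAddCommGroup.tendsto_nhds_zero]
  intro ε hε
  filter_upwards [sup_small hf hx0 hx1 (show (0:ℝ) < ε/2 by positivity),
    self_mem_nhdsWithin] with t hsup htp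
  rw [mem_Ioi] at htp
  rw [Real.norm_eq_abs, _root_.abs_of_nonneg (Mp_nonneg _ _ _)]
  rw [Mp_eq]
  have hIle : (∫ θ in (0:ℝ)..2*π,
      ‖(Real.exp (-t) : ℂ) * f ((Real.exp (-t):ℂ) * circleMap 0 x θ)
        - f (circleMap 0 x θ)‖ ^ p) ≤ ∫ θ in (0:ℝ)..2*π, (ε/2)^p := by
    apply intervalIntegral.integral_mono_on twopi_pos.le
    · apply Continuous.intervalIntegrable
      apply hrpow_cont.comp
      apply Continuous.norm
      exact contOn_comp_circleMap hx0.le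
        (((gt_contOn hf htp)).mono (closedBall_subset_ball hx1))
    · exact intervalIntegrable_const
    · intro θ _
      exact Real.rpow_le_rpow (norm_nonneg _) (hsup θ) hp0.le
  have hc : (∫ θ in (0:ℝ)..2*π, (ε/2)^p) = 2*π * (ε/2)^p := by
    rw [intervalIntegral.integral_const, smul_eq_mul, sub_zero]
  have hle2 : ((1/(2*π)) * ∫ θ in (0:ℝ)..2*π,
      ‖(Real.exp (-t) : ℂ) * f ((Real.exp (-t):ℂ) * circleMap 0 x θ)
        - f (circleMap 0 x θ)‖ ^ p) ^ (1/p) ≤ ((ε/2)^p)^(1/p) := by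
    apply Real.rpow_le_rpow (mean_nonneg p x
      (fun z => (Real.exp (-t) : ℂ) * f ((Real.exp (-t):ℂ)*z) - f z)) _ (by positivity)
    rw [show ((ε/2):ℝ)^p = (1/(2*π)) * (2*π*(ε/2)^p) by field_simp]
    apply mul_le_mul_of_nonneg_left _ (by positivity)
    rw [← hc]
    exact hIle
  have hfin : (((ε/2):ℝ)^p)^(1/p) = ε/2 := by
    rw [← Real.rpow_mul (by positivity), mul_one_div_cancel hp0.ne', Real.rpow_one]
  calc ((1/(2*π)) * ∫ θ in (0:ℝ)..2*π,
      ‖(Real.exp (-t) : ℂ) * f ((Real.exp (-t):ℂ) * circleMap 0 x θ)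
        - f (circleMap 0 x θ)‖ ^ p) ^ (1/p) ≤ ((ε/2)^p)^(1/p) := hle2
    _ = ε/2 := hfin
    _ < ε := by linarith


/-- for the dilation semigroup `φ_t(z) = e^{−t}z`,
`T_t f(z) = e^{−t}f(e^{−t}z)`, and `f ∈ H(p,q,α)` one has `‖T_t f − f‖_{p,q,α} → 0`
as `t → 0⁺`. -/
theorem stmt8 (p q α : ℝ) (hp : 1 ≤ p) (hq : 0 < q) (hα : 0 < α)
    (f : ℂ → ℂ) (hf : DifferentiableOn ℂ f (ball (0:ℂ) 1))
    (hint : IntervalIntegrable (fun r => (1 - r) ^ (α * q - 1) * (Mp p r f) ^ q)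
      MeasureTheory.volume 0 1) :
    Tendsto
      (fun t => Nq p q α
        (fun z => (Real.exp (-t) : ℂ) * f ((Real.exp (-t) : ℂ) * z) - f z))
      (nhdsWithin 0 (Ioi 0)) (nhds 0) := by
  have hp0 : (0:ℝ) < p := by linarith
  set C : ℝ := (2^((p+1)/p))^q with hC
  set G : ℝ → ℂ → ℂ :=
    fun t z => (Real.exp (-t) : ℂ) * f ((Real.exp (-t) : ℂ) * z) - f z with hG
  set bound : ℝ → ℝ := fun x => C * ((1 - x)^(α*q-1) * (Mp p x f)^q) with hbound
  have hbound_int : IntervalIntegrable bound volume 0 1 := hint.const_mul C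
  have hae1 : ∀ᵐ x : ℝ ∂(volume : Measure ℝ), x ≠ 1 := by
    rw [MeasureTheory.ae_iff]
    have h : {x : ℝ | ¬ x ≠ 1} = {1} := by ext y; simp
    rw [h]
    exact measure_singleton 1
  have hmeas : ∀ᶠ t in nhdsWithin (0:ℝ) (Ioi 0),
      AEStronglyMeasurable (fun x => (1 - x)^(α*q-1) * (Mp p x (G t))^q)
        (volume.restrict (Ι (0:ℝ) 1)) := by
    filter_upwards [self_mem_nhdsWithin] with t htp
    rw [mem_Ioi] at htp
    have hcont : ContinuousOn
        (fun x => (1 - x)^(α*q-1) * (Mp p x (G t))^q) (Ioo (0:ℝ) 1) := by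
      apply ContinuousOn.mul
      · intro x hx
        apply ContinuousAt.continuousWithinAt
        have h1 : ContinuousAt (fun y : ℝ => y ^ (α*q-1)) (1-x) :=
          Real.continuousAt_rpow_const (1-x) _ (Or.inl (by linarith [hx.2]))
        exact h1.comp ((continuous_const.sub continuous_id).continuousAt)
      · exact (Mp_contOn hp0 (gt_contOn hf htp)).rpow_const
          (fun x hx => Or.inr hq.le)
    have hIoc : Ι (0:ℝ) 1 = Ioc 0 1 := uIoc_of_le zero_le_one
    rw [hIoc, ← MeasureTheory.Measure.restrict_congr_set Ioo_ae_eq_Ioc]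
    exact hcont.aestronglyMeasurable measurableSet_Ioo
  have hb : ∀ᶠ t in nhdsWithin (0:ℝ) (Ioi 0), ∀ᵐ x ∂(volume : Measure ℝ),
      x ∈ Ι (0:ℝ) 1 → ‖(1 - x)^(α*q-1) * (Mp p x (G t))^q‖ ≤ bound x := by
    filter_upwards [self_mem_nhdsWithin] with t htp
    rw [mem_Ioi] at htp
    filter_upwards [hae1] with x hx1 hxI
    rw [uIoc_of_le zero_le_one] at hxI
    have hx0 : 0 < x := hxI.1
    have hxlt : x < 1 := lt_of_le_of_ne hxI.2 hx1
    have hMg := Mp_g_bound hp hf htp hx0 hxlt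
    have h1x : (0:ℝ) ≤ (1-x)^(α*q-1) := Real.rpow_nonneg (by linarith) _
    have hMq : (Mp p x (G t))^q ≤ C * (Mp p x f)^q := by
      calc (Mp p x (G t))^q ≤ (2^((p+1)/p) * Mp p x f)^q :=
            Real.rpow_le_rpow (Mp_nonneg _ _ _) hMg hq.le
        _ = C * (Mp p x f)^q := Real.mul_rpow (by positivity) (Mp_nonneg _ _ _)
    rw [Real.norm_eq_abs, _root_.abs_of_nonneg
      (mul_nonneg h1x (Real.rpow_nonneg (Mp_nonneg _ _ _) _))]
    calc (1-x)^(α*q-1) * (Mp p x (G t))^q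
        ≤ (1-x)^(α*q-1) * (C * (Mp p x f)^q) := mul_le_mul_of_nonneg_left hMq h1x
      _ = bound x := by rw [hbound]; ring
  have hlim : ∀ᵐ x ∂(volume : Measure ℝ), x ∈ Ι (0:ℝ) 1 →
      Tendsto (fun t => (1 - x)^(α*q-1) * (Mp p x (G t))^q)
        (nhdsWithin (0:ℝ) (Ioi 0)) (𝓝 ((fun _ : ℝ => (0:ℝ)) x)) := by
    filter_upwards [hae1] with x hx1 hxI
    rw [uIoc_of_le zero_le_one] at hxI
    have hx0 : 0 < x := hxI.1
    have hxlt : x < 1 := lt_of_le_of_ne hxI.2 hx1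
    have h0 := Mp_tendsto hp hf hx0 hxlt
    have h1 := h0.rpow_const (p := q) (Or.inr hq.le)
    rw [Real.zero_rpow hq.ne'] at h1
    have h2 := h1.const_mul ((1-x)^(α*q-1))
    rw [mul_zero] at h2
    exact h2
  have hDCT := intervalIntegral.tendsto_integral_filter_of_dominated_convergence
    (μ := volume) (a := 0) (b := 1)
    (F := fun t x => (1 - x)^(α*q-1) * (Mp p x (G t))^q)
    (f := fun _ : ℝ => (0:ℝ)) bound hmeas hb hbound_int hlim
  rw [intervalIntegral.integral_zero] at hDCT
  have hNq := (hDCT.const_mul (α*q)).rpow_const (p := 1/q)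
    (Or.inr (by positivity : (0:ℝ) ≤ 1/q))
  rw [mul_zero, Real.zero_rpow (by positivity : (1:ℝ)/q ≠ 0)] at hNq
  exact hNq
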